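/- There exists a locally compact Hausdorff space K such that: for every ε > 0 the unit sphere of C₀(K) does not contain an uncountable (1+ε)-separated set; the unit sphere of C₀(K) is not the union of countably many sets each of diameter strictly less than 2; and the unit sphere of C₀(K) admits an uncountable 1-equilateral set. -/

import Mathlib

open scoped ZeroAtInfty
open Filter


section Comb

lemma comb_aux {ι α : Type*} (n : ℕ) : ∀ (S : Set ι) (P M : ι → Set α),
    (∀ i, (P i).Finite) → (∀ i, (M i).Finite) → (∀ i, Disjoint (P i) (M i)) →
    (∀ i ∈ S, ∀ j ∈ S, i ≠ j → ((P i ∩ M j) ∪ (M i ∩ P j)).Nonempty) →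
    (∀ i ∈ S, (P i ∪ M i).ncard ≤ n) → S.Countable := by
  induction n with
  | zero =>
    intro S P M hPf hMf _ hx hn
    refine Set.Subsingleton.countable (fun i hi j hj => ?_)
    by_contra hij
    obtain ⟨y, hy⟩ := hx i hi j hj hij
    have hemp : P i ∪ M i = ∅ := by
      have h1 := hn i hi
      rw [Nat.le_zero] at h1
      exact (Set.ncard_eq_zero ((hPf i).union (hMf i))).1 h1
    rcases hy with hy | hy
    · have : y ∈ P i ∪ M i := Set.mem_union_left _ hy.1
      rw [hemp] at this
      exact this
    · have : y ∈ P i ∪ M i := Set.mem_union_right _ hy.1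
      rw [hemp] at this
      exact this
  | succ n ih =>
    intro S P M hPf hMf hd hx hn
    by_contra hS
    by_cases hcase : ∀ x : α, ({i | i ∈ S ∧ x ∈ P i}).Countable ∧ ({i | i ∈ S ∧ x ∈ M i}).Countable
    · -- every "column" is countable; S is covered by columns of a fixed i₀
      obtain ⟨i₀, hi₀⟩ : S.Nonempty :=
        Set.nonempty_iff_ne_empty.2 (fun h => hS (h ▸ Set.countable_empty))
      have hsub : S ⊆ insert i₀ ((⋃ x ∈ P i₀ ∪ M i₀, {j | j ∈ S ∧ x ∈ M j}) ∪
          (⋃ x ∈ P i₀ ∪ M i₀, {j | j ∈ S ∧ x ∈ P j})) := by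
        intro j hj
        by_cases hji : j = i₀
        · exact hji ▸ Set.mem_insert _ _
        · obtain ⟨y, hy⟩ := hx i₀ hi₀ j hj (Ne.symm hji)
          refine Set.mem_insert_of_mem _ ?_
          rcases hy with hy | hy
          · exact Or.inl (Set.mem_biUnion (Set.mem_union_left _ hy.1) ⟨hj, hy.2⟩)
          · exact Or.inr (Set.mem_biUnion (Set.mem_union_right _ hy.1) ⟨hj, hy.2⟩)
      have hcnt : (insert i₀ ((⋃ x ∈ P i₀ ∪ M i₀, {j | j ∈ S ∧ x ∈ M j}) ∪
          (⋃ x ∈ P i₀ ∪ M i₀, {j | j ∈ S ∧ x ∈ P j}))).Countable := by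
        refine Set.Countable.insert _ (Set.Countable.union ?_ ?_)
        · exact Set.Countable.biUnion ((hPf i₀).union (hMf i₀)).countable
            (fun x _ => (hcase x).2)
        · exact Set.Countable.biUnion ((hPf i₀).union (hMf i₀)).countable
            (fun x _ => (hcase x).1)
      exact hS (hcnt.mono hsub)
    · push_neg at hcase
      obtain ⟨x, hxc⟩ := hcase
      by_cases hPside : ¬({i | i ∈ S ∧ x ∈ P i}).Countable
      · -- remove x from all the P's
        refine hPside (ih {i | i ∈ S ∧ x ∈ P i} (fun i => P i \ {x}) M
          (fun i => (hPf i).diff) hMf (fun i => ((hd i).mono_left Set.diff_subset))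
          ?_ ?_)
        · intro i hi j hj hij
          obtain ⟨y, hy⟩ := hx i hi.1 j hj.1 hij
          rcases hy with hy | hy
          · refine ⟨y, Or.inl ⟨⟨hy.1, ?_⟩, hy.2⟩⟩
            simp only [Set.mem_singleton_iff]
            rintro rfl
            exact (hd j).le_bot ⟨hj.2, hy.2⟩
          · refine ⟨y, Or.inr ⟨hy.1, hy.2, ?_⟩⟩
            simp only [Set.mem_singleton_iff]
            rintro rfl
            exact (hd i).le_bot ⟨hi.2, hy.1⟩
        · intro i hi
          have hss : (P i \ {x}) ∪ M i ⊂ P i ∪ M i := by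
            constructor
            · exact Set.union_subset_union_left _ Set.diff_subset
            · intro hsub2
              have hx1 : x ∈ P i ∪ M i := Set.mem_union_left _ hi.2
              have hx2 := hsub2 hx1
              rcases hx2 with h | h
              · exact h.2 rfl
              · exact (hd i).le_bot ⟨hi.2, h⟩
          have := Set.ncard_lt_ncard hss ((hPf i).union (hMf i))
          have h2 := hn i hi.1
          show (P i \ {x} ∪ M i).ncard ≤ n
          omega
      · push_neg at hPside
        have hMside : ¬({i | i ∈ S ∧ x ∈ M i}).Countable := hxc hPside
        refine hMside (ih {i | i ∈ S ∧ x ∈ M i} P (fun i => M i \ {x})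
          hPf (fun i => (hMf i).diff) (fun i => ((hd i).mono_right Set.diff_subset))
          ?_ ?_)
        · intro i hi j hj hij
          obtain ⟨y, hy⟩ := hx i hi.1 j hj.1 hij
          rcases hy with hy | hy
          · refine ⟨y, Or.inl ⟨hy.1, hy.2, ?_⟩⟩
            simp only [Set.mem_singleton_iff]
            rintro rfl
            exact (hd i).le_bot ⟨hy.1, hi.2⟩
          · refine ⟨y, Or.inr ⟨⟨hy.1, ?_⟩, hy.2⟩⟩
            simp only [Set.mem_singleton_iff]
            rintro rfl
            exact (hd j).le_bot ⟨hy.2, hj.2⟩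
        · intro i hi
          have hss : P i ∪ (M i \ {x}) ⊂ P i ∪ M i := by
            constructor
            · exact Set.union_subset_union_right _ Set.diff_subset
            · intro hsub2
              have hx1 : x ∈ P i ∪ M i := Set.mem_union_right _ hi.2
              have hx2 := hsub2 hx1
              rcases hx2 with h | h
              · exact (hd i).le_bot ⟨h, hi.2⟩
              · exact h.2 rfl
          have := Set.ncard_lt_ncard hss ((hPf i).union (hMf i))
          have h2 := hn i hi.1
          show (P i ∪ (M i \ {x})).ncard ≤ n
          omega

section Helpers

variable {K : Type} [TopologicalSpace K] [DiscreteTopology K]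

noncomputable def fsC0 (s : K → ℝ) (h : (Function.support s).Finite) : C₀(K, ℝ) where
  toFun := s
  continuous_toFun := continuous_of_discreteTopology
  zero_at_infty' := by
    rw [cocompact_eq_cofinite]
    refine tendsto_const_nhds.congr' ?_
    rw [Filter.EventuallyEq, Filter.eventually_cofinite]
    exact h.subset (fun x hx => by simpa [Function.mem_support] using fun h' => hx h'.symm)

@[simp] lemma fsC0_apply (s : K → ℝ) (h) (x : K) : fsC0 s h x = s x := rfl

omit [DiscreteTopology K] in
lemma abs_apply_le_norm (f : C₀(K, ℝ)) (x : K) : |f x| ≤ ‖f‖ := by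
  rw [← ZeroAtInftyContinuousMap.norm_toBCF_eq_norm]
  simpa using f.toBCF.norm_coe_le_norm x

omit [DiscreteTopology K] in
lemma norm_le_of_forall (f : C₀(K, ℝ)) {C : ℝ} (h0 : 0 ≤ C) (h : ∀ x, |f x| ≤ C) :
    ‖f‖ ≤ C := by
  rw [← ZeroAtInftyContinuousMap.norm_toBCF_eq_norm]
  exact (BoundedContinuousFunction.norm_le h0).2 (by simpa using h)

lemma finite_superlevel (f : C₀(K, ℝ)) {c : ℝ} (hc : 0 < c) : {x : K | c ≤ |f x|}.Finite := by
  have h := f.zero_at_infty'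
  rw [cocompact_eq_cofinite, Metric.tendsto_nhds] at h
  have h2 := h c hc
  rw [Filter.eventually_cofinite] at h2
  refine h2.subset fun x hx => ?_
  simp only [Set.mem_setOf_eq, not_lt, Real.dist_eq, sub_zero] at *
  exact hx

/-- The indicator of a single point, as an element of `C₀`. -/
noncomputable def ind (γ : K) : C₀(K, ℝ) :=
  fsC0 (Set.indicator {γ} (fun _ => (1:ℝ)))
    ((Set.finite_singleton γ).subset Set.support_indicator_subset)

lemma ind_apply_self (γ : K) : ind γ γ = 1 := by
  show Set.indicator {γ} (fun _ => (1:ℝ)) γ = 1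
  exact Set.indicator_of_mem (Set.mem_singleton γ) _

lemma ind_apply_ne {γ x : K} (h : x ≠ γ) : ind γ x = 0 := by
  show Set.indicator {γ} (fun _ => (1:ℝ)) x = 0
  exact Set.indicator_of_notMem h (fun _ => (1:ℝ))

lemma abs_ind_le (γ x : K) : |ind γ x| ≤ 1 := by
  rcases eq_or_ne x γ with rfl | h
  · rw [ind_apply_self]; norm_num
  · rw [ind_apply_ne h]; norm_num

lemma norm_ind (γ : K) : ‖ind γ‖ = 1 := by
  refine le_antisymm (norm_le_of_forall _ one_pos.le (abs_ind_le γ)) ?_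
  have := abs_apply_le_norm (ind γ) γ
  rwa [ind_apply_self, abs_one] at this

lemma ind_injective : Function.Injective (ind : K → C₀(K, ℝ)) := by
  intro γ δ h
  by_contra hne
  have := congrArg (fun f : C₀(K, ℝ) => f γ) h
  have this : ind γ γ = ind δ γ := this
  rw [ind_apply_self, ind_apply_ne (fun hh : γ = δ => hne hh)] at this
  exact one_ne_zero this

lemma norm_ind_sub_ind {γ δ : K} (h : γ ≠ δ) : ‖ind γ - ind δ‖ = 1 := by
  refine le_antisymm (norm_le_of_forall _ one_pos.le (fun x => ?_)) ?_
  · rw [ZeroAtInftyContinuousMap.sub_apply]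
    rcases eq_or_ne x γ with rfl | h1
    · rw [ind_apply_self, ind_apply_ne h, sub_zero, abs_one]
    · rw [ind_apply_ne h1, zero_sub, abs_neg]
      exact abs_ind_le δ x
  · have := abs_apply_le_norm (ind γ - ind δ) γ
    rwa [ZeroAtInftyContinuousMap.sub_apply, ind_apply_self, ind_apply_ne h,
      sub_zero, abs_one] at this

end Helpers

lemma comb {ι α : Type*} (S : Set ι) (P M : ι → Set α)
    (hPf : ∀ i, (P i).Finite) (hMf : ∀ i, (M i).Finite) (hd : ∀ i, Disjoint (P i) (M i))
    (hx : ∀ i ∈ S, ∀ j ∈ S, i ≠ j → ((P i ∩ M j) ∪ (M i ∩ P j)).Nonempty) :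
    S.Countable := by
  have hS : S = ⋃ n : ℕ, {i | i ∈ S ∧ (P i ∪ M i).ncard ≤ n} := by
    ext i
    simp only [Set.mem_iUnion, Set.mem_setOf_eq]
    exact ⟨fun h => ⟨_, h, le_rfl⟩, fun ⟨n, h, _⟩ => h⟩
  rw [hS]
  refine Set.countable_iUnion fun n => comb_aux n _ P M hPf hMf hd ?_ (fun i hi => hi.2)
  exact fun i hi j hj hij => hx i hi.1 j hj.1 hij

lemma discrete_locallyCompact (X : Type) [TopologicalSpace X] [DiscreteTopology X] :
    LocallyCompactSpace X := by
  refine ⟨fun x n hn => ⟨{x}, ?_, ?_, isCompact_singleton⟩⟩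
  · simp [nhds_discrete]
  · simpa [nhds_discrete] using hn

lemma not_countable_setsets : ¬Countable (Set (Set ℕ)) := by
  intro h
  haveI : Countable (Set ℕ) :=
    Function.Injective.countable (f := fun s : Set ℕ => ({s} : Set (Set ℕ)))
      (fun a b hab => Set.singleton_eq_singleton_iff.1 hab)
  obtain ⟨f, hf⟩ := exists_injective_nat (Set ℕ)
  exact Function.cantor_injective f hf

theorem stmt19 :
    ∃ (K : Type) (_ : TopologicalSpace K) (_ : LocallyCompactSpace K) (_ : T2Space K),
      (∀ ε : ℝ, 0 < ε →
        ¬∃ N : Set C₀(K, ℝ), N ⊆ {f : C₀(K, ℝ) | ‖f‖ = 1} ∧ ¬N.Countable ∧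
          ∀ f ∈ N, ∀ g ∈ N, f ≠ g → 1 + ε ≤ ‖f - g‖) ∧
      (¬∃ f : ℕ → Set C₀(K, ℝ),
        (⋃ n, f n) = {g : C₀(K, ℝ) | ‖g‖ = 1} ∧ ∀ n, Metric.diam (f n) < 2) ∧
      (∃ N : Set C₀(K, ℝ), N ⊆ {f : C₀(K, ℝ) | ‖f‖ = 1} ∧ ¬N.Countable ∧
        ∀ f ∈ N, ∀ g ∈ N, f ≠ g → ‖f - g‖ = 1) := by
  classical
  letI : TopologicalSpace (Set (Set ℕ)) := ⊥
  haveI : DiscreteTopology (Set (Set ℕ)) := ⟨rfl⟩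
  refine ⟨Set (Set ℕ), inferInstance, discrete_locallyCompact _, inferInstance, ?_, ?_, ?_⟩
  · -- Part 1: no uncountable (1+ε)-separated set
    rintro ε hε ⟨N, hNs, hNu, hsep⟩
    refine hNu (comb N (fun f => {x | ε / 2 ≤ f x}) (fun f => {x | f x ≤ -(ε / 2)})
      ?_ ?_ ?_ ?_)
    · intro f
      refine (finite_superlevel f (half_pos hε)).subset fun x hx => ?_
      simp only [Set.mem_setOf_eq] at hx
      exact le_trans hx (le_abs_self (f x))
    · intro f
      refine (finite_superlevel f (half_pos hε)).subset fun x hx => ?_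
      simp only [Set.mem_setOf_eq] at hx
      calc ε / 2 ≤ -(f x) := by linarith
        _ ≤ |f x| := neg_le_abs _
    · intro f
      rw [Set.disjoint_left]
      intro x h1 h2
      simp only [Set.mem_setOf_eq] at h1 h2
      linarith
    · intro f hf g hg hfg
      have hsep' := hsep f hf g hg hfg
      have hf1 : ‖f‖ = 1 := hNs hf
      have hg1 : ‖g‖ = 1 := hNs hg
      have hex : ∃ x, 1 + ε / 2 < |f x - g x| := by
        by_contra hcon
        push_neg at hcon
        have hle : ‖f - g‖ ≤ 1 + ε / 2 := by
          refine norm_le_of_forall _ (by linarith) fun x => ?_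
          rw [ZeroAtInftyContinuousMap.sub_apply]
          exact hcon x
        linarith
      obtain ⟨x, hx1⟩ := hex
      have hfx := abs_le.1 (hf1 ▸ abs_apply_le_norm f x)
      have hgx := abs_le.1 (hg1 ▸ abs_apply_le_norm g x)
      rcases le_or_gt (f x) (g x) with hle | hlt
      · rw [abs_of_nonpos (by linarith)] at hx1
        exact ⟨x, Or.inr ⟨by simp only [Set.mem_setOf_eq]; linarith,
          by simp only [Set.mem_setOf_eq]; linarith⟩⟩
      · rw [abs_of_pos (by linarith)] at hx1
        exact ⟨x, Or.inl ⟨by simp only [Set.mem_setOf_eq]; linarith,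
          by simp only [Set.mem_setOf_eq]; linarith⟩⟩
  · -- Part 2: no countable cover by sets of diameter < 2
    rintro ⟨A, hAu, hAd⟩
    have hsphere : ∀ k, A k ⊆ {g : C₀(Set (Set ℕ), ℝ) | ‖g‖ = 1} := by
      intro k x hx
      rw [← hAu]
      exact Set.mem_iUnion.2 ⟨k, hx⟩
    have hbd : ∀ k, Bornology.IsBounded (A k) := by
      intro k
      refine (Metric.isBounded_closedBall (x := (0 : C₀(Set (Set ℕ), ℝ))) (r := 1)).subset ?_
      intro x hx
      rw [Metric.mem_closedBall, dist_zero_right]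
      exact le_of_eq (hsphere k hx)
    have key : ∀ k u v, u ∈ A k → v ∈ A k → dist u v < 2 :=
      fun k u v hu hv => (Metric.dist_le_diam_of_mem (hbd k) hu hv).trans_lt (hAd k)
    have hmemm : ∀ γ δ : Set (Set ℕ), ∃ k, ind γ - ind δ ∈ A k ∨ γ = δ := by
      intro γ δ
      by_cases h : γ = δ
      · exact ⟨0, Or.inr h⟩
      · have : ind γ - ind δ ∈ ⋃ n, A n := by
          rw [hAu]
          exact norm_ind_sub_ind h
        obtain ⟨k, hk⟩ := Set.mem_iUnion.1 this
        exact ⟨k, Or.inl hk⟩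
    choose mm hmm using hmemm
    set Φ : Set (Set ℕ) → Set ℕ := fun γ => {q | ∃ δ, δ ≠ γ ∧ mm γ δ = q} with hΦdef
    have hΦ : Function.Injective Φ := by
      intro γ δ h
      by_contra hne
      have hq : mm γ δ ∈ Φ γ := ⟨δ, Ne.symm hne, rfl⟩
      rw [h] at hq
      obtain ⟨δ', hδ'1, hδ'2⟩ := hq
      have hu : ind γ - ind δ ∈ A (mm γ δ) := (hmm γ δ).resolve_right hne
      have hv : ind δ - ind δ' ∈ A (mm γ δ) := by
        rw [← hδ'2]
        exact (hmm δ δ').resolve_right (Ne.symm hδ'1)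
      have hlt := key _ _ _ hu hv
      have hge : (2 : ℝ) ≤ dist (ind γ - ind δ) (ind δ - ind δ') := by
        rw [dist_eq_norm]
        have h2 := abs_apply_le_norm (ind γ - ind δ - (ind δ - ind δ')) δ
        rw [ZeroAtInftyContinuousMap.sub_apply, ZeroAtInftyContinuousMap.sub_apply,
          ZeroAtInftyContinuousMap.sub_apply, ind_apply_ne (Ne.symm hne), ind_apply_self,
          ind_apply_ne (Ne.symm hδ'1)] at h2
        norm_num at h2
        exact h2
      linarith
    have hcard := Cardinal.mk_le_of_injective hΦ
    rw [Cardinal.mk_set] at hcard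
    exact absurd hcard (not_le.2 (Cardinal.cantor _))
  · -- Part 3: an uncountable 1-equilateral set
    refine ⟨Set.range ind, ?_, ?_, ?_⟩
    · rintro f ⟨γ, rfl⟩
      exact norm_ind γ
    · intro hc
      haveI : Countable (Set.range (ind : Set (Set ℕ) → C₀(Set (Set ℕ), ℝ))) :=
        Set.countable_coe_iff.2 hc
      haveI : Countable (Set (Set ℕ)) :=
        Countable.of_equiv _ (Equiv.ofInjective ind ind_injective).symm
      exact not_countable_setsets ‹_›
    · rintro f ⟨γ, rfl⟩ g ⟨δ, rfl⟩ hfg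
      exact norm_ind_sub_ind (fun h => hfg (congrArg ind h))
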